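/- arXiv:2310.02740 — 4 statements merged into one kernel-verified Lean document; each statement's English description precedes it below -/
import Mathlib

section
/- Let U be a unitary on ℂ^d ⊗ ℂ^d, define the operator entanglement E(U) = (d²/(d²−1))(1 − (1/d⁴)Tr[(U^{R₂}U^{R₂†})²]), and let L = (1/d)[U^{R₂}U^{R₂†}]^{R₂} be the channel matrix of E(ρ) = Tr₂[U(ρ⊗I/d)U†], which has eigenvalue λ₀ = 1 with eigenvector the vectorized identity. Then the remaining eigenvalues λ₁,...,λ_{d²−1} satisfy Σ_{i=1}^{d²−1} |λᵢ|² ≤ (d²−1)(1 − E(U)). -/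
open Matrix

/-- The realignment `X^{R₂}` of a matrix on `ℂ^d ⊗ ℂ^d`, defined by
`⟨iα|X|jβ⟩ = ⟨ij|X^{R₂}|αβ⟩`. -/
def realign {d : ℕ} (X : Matrix (Fin d × Fin d) (Fin d × Fin d) ℂ) :
    Matrix (Fin d × Fin d) (Fin d × Fin d) ℂ :=
  Matrix.of fun p q => X (p.1, q.1) (p.2, q.2)

/-- The vectorized identity `|I⟩`, with components `⟨ij|I⟩ = δᵢⱼ`. -/
def vecId (d : ℕ) : Fin d × Fin d → ℂ := fun p => if p.1 = p.2 then 1 else 0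

/-- The operator entanglement
`E(U) = (d²/(d²−1))(1 − (1/d⁴) Tr[(U^{R₂}U^{R₂†})²])`. -/
noncomputable def opEnt {d : ℕ} (U : Matrix (Fin d × Fin d) (Fin d × Fin d) ℂ) : ℝ :=
  ((d : ℝ) ^ 2 / ((d : ℝ) ^ 2 - 1)) *
    (1 - (1 / (d : ℝ) ^ 4) *
      ((realign U * (realign U)ᴴ * (realign U * (realign U)ᴴ)).trace.re))


open Polynomial


noncomputable section

variable {m : Type*} [Fintype m] [DecidableEq m]

def frobSq (A : Matrix m m ℂ) : ℝ := ∑ i, ∑ j, Complex.normSq (A i j)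

lemma frobSq_nonneg (A : Matrix m m ℂ) : 0 ≤ frobSq A := by
  apply Finset.sum_nonneg; intro i _; apply Finset.sum_nonneg; intro j _
  exact Complex.normSq_nonneg _

lemma frobSq_eq_trace_re (A : Matrix m m ℂ) : frobSq A = ((A * Aᴴ).trace).re := by
  rw [Matrix.trace]
  rw [Complex.re_sum]
  refine Finset.sum_congr rfl fun i _ => ?_
  rw [Matrix.diag_apply, Matrix.mul_apply, Complex.re_sum]
  refine Finset.sum_congr rfl fun j _ => ?_
  rw [Matrix.conjTranspose_apply]
  rw [show star (A i j) = (starRingEnd ℂ) (A i j) from rfl, Complex.mul_conj]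
  simp

lemma frobSq_conj (A Q : Matrix m m ℂ) (h : Qᴴ * Q = 1) :
    frobSq (Qᴴ * A * Q) = frobSq A := by
  have hQQ : Q * Qᴴ = 1 := mul_eq_one_comm.mp h
  rw [frobSq_eq_trace_re, frobSq_eq_trace_re]
  congr 1
  have : (Qᴴ * A * Q) * (Qᴴ * A * Q)ᴴ = Qᴴ * (A * Aᴴ) * Q := by
    simp only [conjTranspose_mul, conjTranspose_conjTranspose]
    calc Qᴴ * A * Q * (Qᴴ * (Aᴴ * Q)) = Qᴴ * A * (Q * Qᴴ) * Aᴴ * Q := by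
          noncomm_ring
      _ = Qᴴ * (A * Aᴴ) * Q := by rw [hQQ]; noncomm_ring
  rw [this, Matrix.trace_mul_cycle, ← Matrix.mul_assoc, hQQ, Matrix.one_mul]


/-- charmatrix of a conjugate. -/
lemma charmatrix_unitary_conj (A Q : Matrix m m ℂ) (h : Qᴴ * Q = 1) :
    charmatrix (Qᴴ * A * Q) = (Qᴴ.map C) * charmatrix A * (Q.map C) := by
  have hmap : (Qᴴ.map (C : ℂ →+* ℂ[X])) * (Q.map C) = 1 := by
    rw [← Matrix.map_mul, h, Matrix.map_one _ (map_zero C) (map_one C)]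
  have hch : ∀ (M : Matrix m m ℂ), charmatrix M = (X : ℂ[X]) • (1 : Matrix m m ℂ[X]) - M.map C := by
    intro M
    ext i j
    by_cases hij : i = j <;>
      simp [hij, charmatrix_apply, Matrix.one_apply, diagonal_apply, Matrix.smul_apply]
  rw [hch, hch, mul_sub, sub_mul, mul_smul_comm, smul_mul_assoc, mul_one, hmap,
    ← Matrix.map_mul, ← Matrix.map_mul]

lemma charpoly_unitary_conj (A Q : Matrix m m ℂ) (h : Qᴴ * Q = 1) :
    (Qᴴ * A * Q).charpoly = A.charpoly := by
  have hmap : (Qᴴ.map (C : ℂ →+* ℂ[X])) * (Q.map C) = 1 := by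
    rw [← Matrix.map_mul, h, Matrix.map_one _ (map_zero C) (map_one C)]
  have hdet : (Qᴴ.map (C : ℂ →+* ℂ[X])).det * (Q.map C).det = 1 := by
    rw [← det_mul, hmap, det_one]
  rw [Matrix.charpoly, charmatrix_unitary_conj A Q h, det_mul, det_mul, mul_comm, ← mul_assoc,
    mul_comm ((Q.map C).det), hdet, one_mul, Matrix.charpoly]


lemma eval_charpoly' (A : Matrix m m ℂ) (μ : ℂ) :
    A.charpoly.eval μ = (Matrix.scalar m μ - A).det := by
  rw [Matrix.charpoly, eval_det, matPolyEquiv_charmatrix]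
  simp

lemma exists_eigenvector (n : ℕ) (A : Matrix (Fin (n+1)) (Fin (n+1)) ℂ) :
    ∃ (μ : ℂ) (v : Fin (n+1) → ℂ), v ≠ 0 ∧ A.mulVec v = μ • v := by
  obtain ⟨μ, hμ⟩ : ∃ μ, A.charpoly.IsRoot μ := by
    apply IsAlgClosed.exists_root
    have h1 : A.charpoly.natDegree = n + 1 := by
      simpa using A.charpoly_natDegree_eq_dim
    intro hdeg
    have h2 : A.charpoly.natDegree = 0 := natDegree_eq_zero_iff_degree_le_zero.2 (le_of_eq hdeg)
    omega
  have hdet : (Matrix.scalar (Fin (n+1)) μ - A).det = 0 := by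
    rw [← eval_charpoly']; exact hμ
  obtain ⟨v, hv0, hv⟩ := (Matrix.exists_mulVec_eq_zero_iff).2 hdet
  refine ⟨μ, v, hv0, ?_⟩
  have := hv
  rw [sub_mulVec] at this
  have h2 : (Matrix.scalar (Fin (n+1)) μ).mulVec v = μ • v := by
    ext i
    simp [Matrix.scalar, mulVec, dotProduct, diagonal_apply, Finset.sum_ite_eq,
      Pi.smul_apply, smul_eq_mul]
  rw [h2] at this
  exact (sub_eq_zero.mp this).symm ▸ rfl

lemma charmatrix_submatrix_succ {n : ℕ} (B : Matrix (Fin (n+1)) (Fin (n+1)) ℂ) :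
    (charmatrix B).submatrix Fin.succ Fin.succ = charmatrix (B.submatrix Fin.succ Fin.succ) := by
  ext i j
  by_cases hij : i = j
  · subst hij; simp [charmatrix_apply_eq]
  · rw [Matrix.submatrix_apply, charmatrix_apply_ne _ _ _ (fun h => hij (Fin.succ_injective _ h)),
      charmatrix_apply_ne _ _ _ hij, Matrix.submatrix_apply]

lemma charpoly_of_col {n : ℕ} (B : Matrix (Fin (n+1)) (Fin (n+1)) ℂ) (μ : ℂ)
    (h0 : ∀ i, B i 0 = if i = 0 then μ else 0) :
    B.charpoly = (X - C μ) * (B.submatrix Fin.succ Fin.succ).charpoly := by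
  rw [Matrix.charpoly, det_succ_column_zero]
  rw [Finset.sum_eq_single 0]
  · rw [charmatrix_apply_eq, h0 0, if_pos rfl]
    simp only [Fin.val_zero, pow_zero, one_mul, Fin.succAbove_zero]
    rw [charmatrix_submatrix_succ, Matrix.charpoly]
  · intro i _ hi
    rw [charmatrix_apply_ne _ _ _ hi, h0 i, if_neg hi]
    simp
  · intro h; exact absurd (Finset.mem_univ 0) h

lemma schur_aux : ∀ (n : ℕ) (A : Matrix (Fin n) (Fin n) ℂ),
    ((A.charpoly.roots).map Complex.normSq).sum ≤ frobSq A := by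
  intro n
  induction n with
  | zero =>
      intro A
      have : A.charpoly = 1 := by
        have h := A.charpoly_monic
        have h1 : A.charpoly.natDegree = 0 := by simpa using A.charpoly_natDegree_eq_dim
        exact (Monic.natDegree_eq_zero h).mp h1
      rw [this, Polynomial.roots_one]
      simpa using frobSq_nonneg A
  | succ n ih =>
      intro A
      obtain ⟨μ, v, hv0, hAv⟩ := exists_eigenvector n A
      -- normalize
      set w : EuclideanSpace ℂ (Fin (n+1)) := (WithLp.equiv 2 _).symm v with hw
      have hw0 : w ≠ 0 := by
        simpa [hw] using hv0
      set u : EuclideanSpace ℂ (Fin (n+1)) := (‖w‖⁻¹ : ℂ) • w with hu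
      have hnu : ‖u‖ = 1 := by
        rw [hu, norm_smul]
        simp [norm_ne_zero_iff.mpr hw0, inv_mul_cancel₀]
      have hAu : A.mulVec u = μ • (u : Fin (n+1) → ℂ) := by
        show A.mulVec ((‖w‖⁻¹ : ℂ) • v) = _
        rw [Matrix.mulVec_smul, hAv, smul_comm]
        rfl
      -- orthonormal basis extension
      have hortho : Orthonormal ℂ (Set.restrict {(0 : Fin (n+1))} (fun _ => u)) := by
        rw [orthonormal_iff_ite]
        intro i j
        have : i = j := Subsingleton.elim i j
        subst this
        rw [if_pos rfl]
        have hri : Set.restrict {(0:Fin (n+1))} (fun _ => u) i = u := rfl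
        rw [hri, @inner_self_eq_norm_sq_to_K ℂ, hnu]
        norm_num
      obtain ⟨b, hb⟩ := hortho.exists_orthonormalBasis_extension_of_card_eq (by simp)
      have hb0 : b 0 = u := hb 0 rfl
      set Q : Matrix (Fin (n+1)) (Fin (n+1)) ℂ := Matrix.of (fun i j => b j i) with hQdef
      have hQ : Qᴴ * Q = 1 := by
        ext j k
        rw [Matrix.mul_apply, Matrix.one_apply]
        have := (orthonormal_iff_ite.mp b.orthonormal) j k
        rw [PiLp.inner_apply] at this
        simpa [Matrix.conjTranspose_apply, hQdef, RCLike.inner_apply, mul_comm] using this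
      have hQQ : Q * Qᴴ = 1 := mul_eq_one_comm.mp hQ
      set B : Matrix (Fin (n+1)) (Fin (n+1)) ℂ := Qᴴ * A * Q with hBdef
      have hcol : ∀ i, B i 0 = if i = 0 then μ else 0 := by
        have hQe : Q.mulVec (Pi.single 0 1) = (u : Fin (n+1) → ℂ) := by
          ext i
          rw [Matrix.mulVec_single]
          simp [hQdef, hb0]
        have hBe : B.mulVec (Pi.single 0 1) = μ • (Pi.single 0 1 : Fin (n+1) → ℂ) := by
          have e2 : Qᴴ *ᵥ (u : Fin (n+1) → ℂ) = Pi.single 0 1 := by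
            rw [← hQe, Matrix.mulVec_mulVec, hQ, Matrix.one_mulVec]
          calc B *ᵥ Pi.single 0 1 = Qᴴ *ᵥ (A *ᵥ (Q *ᵥ Pi.single 0 1)) := by
                rw [hBdef, Matrix.mulVec_mulVec, Matrix.mulVec_mulVec]
            _ = Qᴴ *ᵥ (μ • (u : Fin (n+1) → ℂ)) := by rw [hQe, hAu]
            _ = μ • (Qᴴ *ᵥ (u : Fin (n+1) → ℂ)) := Matrix.mulVec_smul Qᴴ μ _
            _ = μ • (Pi.single 0 1 : Fin (n+1) → ℂ) := by rw [e2]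
        intro i
        have := congrFun hBe i
        rw [Matrix.mulVec_single] at this
        simpa [Pi.single_apply, eq_comm] using this
      have hchar : A.charpoly = (X - C μ) * (B.submatrix Fin.succ Fin.succ).charpoly := by
        rw [← charpoly_unitary_conj A Q hQ, ← hBdef, charpoly_of_col B μ hcol]
      set B' := B.submatrix Fin.succ Fin.succ with hB'
      have hroots : A.charpoly.roots = μ ::ₘ B'.charpoly.roots := by
        rw [hchar, Polynomial.roots_mul, Polynomial.roots_X_sub_C]
        · rfl
        · rw [← hchar]; exact A.charpoly_monic.ne_zero
      rw [hroots, Multiset.map_cons, Multiset.sum_cons]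
      have hfrob : frobSq B = frobSq A := frobSq_conj A Q hQ
      have hle : Complex.normSq μ + frobSq B' ≤ frobSq B := by
        rw [frobSq, frobSq]
        rw [Fin.sum_univ_succ (f := fun i => ∑ j, Complex.normSq (B i j))]
        have h1 : Complex.normSq μ ≤ ∑ j, Complex.normSq (B 0 j) := by
          have : Complex.normSq μ = Complex.normSq (B 0 0) := by rw [hcol 0, if_pos rfl]
          rw [this]
          exact Finset.single_le_sum (f := fun j => Complex.normSq (B 0 j))
            (fun j _ => Complex.normSq_nonneg _) (Finset.mem_univ 0)
        have h2 : ∑ i : Fin n, ∑ j : Fin n, Complex.normSq (B' i j) ≤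
            ∑ i : Fin n, ∑ j : Fin (n+1), Complex.normSq (B i.succ j) := by
          apply Finset.sum_le_sum
          intro i _
          rw [Fin.sum_univ_succ (f := fun j => Complex.normSq (B i.succ j))]
          have : (0:ℝ) ≤ Complex.normSq (B i.succ 0) := Complex.normSq_nonneg _
          simp only [hB', Matrix.submatrix_apply]
          linarith [le_refl (∑ j : Fin n, Complex.normSq (B i.succ j.succ))]
        linarith
      have := ih B'
      rw [← hfrob]
      linarith


section schur2
variable {m : Type*} [Fintype m] [DecidableEq m]

lemma schur_bound (A : Matrix m m ℂ) :
    ((A.charpoly.roots).map fun z => ‖z‖ ^ 2).sum ≤ frobSq A := by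
  have h := schur_aux (Fintype.card m)
    (reindex (Fintype.equivFin m) (Fintype.equivFin m) A)
  rw [Matrix.charpoly_reindex] at h
  have h2 : frobSq (reindex (Fintype.equivFin m) (Fintype.equivFin m) A) = frobSq A := by
    rw [frobSq, frobSq]
    refine (Fintype.sum_equiv (Fintype.equivFin m).symm _ _ fun i => ?_)
    refine (Fintype.sum_equiv (Fintype.equivFin m).symm _ _ fun j => ?_)
    simp
  rw [h2] at h
  refine le_trans (le_of_eq ?_) h
  congr 1
  apply Multiset.map_congr rfl
  intro z _
  rw [Complex.sq_norm]
end schur2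

/-- the index swap underlying realignment -/
def realignEquiv (d : ℕ) :
    ((Fin d × Fin d) × (Fin d × Fin d)) ≃ ((Fin d × Fin d) × (Fin d × Fin d)) where
  toFun x := ((x.1.1, x.2.1), (x.1.2, x.2.2))
  invFun x := ((x.1.1, x.2.1), (x.1.2, x.2.2))
  left_inv x := rfl
  right_inv x := rfl

lemma frobSq_realign {d : ℕ} (X : Matrix (Fin d × Fin d) (Fin d × Fin d) ℂ) :
    frobSq (realign X) = frobSq X := by
  rw [frobSq, frobSq, ← Finset.sum_product', ← Finset.sum_product']
  refine Fintype.sum_equiv (realignEquiv d) _ _ fun x => rfl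

/-- For unitary `U`, the channel matrix `L = (1/d)[U^{R₂}U^{R₂†}]^{R₂}` has
eigenvalue `1` on the vectorized identity, and the remaining eigenvalues
(the eigenvalues of `L̃ = L − |I⟩⟨I|/d`, with algebraic multiplicity) satisfy
`Σᵢ |λᵢ|² ≤ (d²−1)(1 − E(U))`. -/
theorem nontrivial_spectrum_bound (d : ℕ) (hd : 0 < d)
    (U : Matrix (Fin d × Fin d) (Fin d × Fin d) ℂ)
    (hU : Uᴴ * U = 1)
    (L : Matrix (Fin d × Fin d) (Fin d × Fin d) ℂ)
    (hL : L = ((1 : ℂ) / d) • realign (realign U * (realign U)ᴴ))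
    (Ltil : Matrix (Fin d × Fin d) (Fin d × Fin d) ℂ)
    (hLtil : Ltil = L - ((1 : ℂ) / d) • Matrix.vecMulVec (vecId d) (vecId d)) :
    L.mulVec (vecId d) = vecId d ∧
    ((Ltil.charpoly.roots).map fun z => ‖z‖ ^ 2).sum ≤
      ((d : ℝ) ^ 2 - 1) * (1 - opEnt U) := by
  have hdR : (d : ℝ) ≠ 0 := Nat.cast_ne_zero.mpr hd.ne'
  have hdC : (d : ℂ) ≠ 0 := Nat.cast_ne_zero.mpr hd.ne'
  have hUU : U * Uᴴ = 1 := mul_eq_one_comm.mp hU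
  set R := realign U with hR
  set M := R * Rᴴ with hM
  -- Part 1 : fixed point
  have hfix : L.mulVec (vecId d) = vecId d := by
    ext p
    rw [hL, Matrix.smul_mulVec, Pi.smul_apply, smul_eq_mul]
    have key : (realign M).mulVec (vecId d) p = ∑ q1 : Fin d, M (p.1, q1) (p.2, q1) := by
      rw [Matrix.mulVec, dotProduct, Fintype.sum_prod_type]
      refine Finset.sum_congr rfl fun q1 _ => ?_
      rw [Finset.sum_eq_single q1]
      · simp [realign, vecId]
      · intro q2 _ hne; simp [realign, vecId, Ne.symm hne]
      · intro h; exact absurd (Finset.mem_univ q1) h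
    have key2 : ∀ q1 : Fin d, M (p.1, q1) (p.2, q1)
        = ∑ r : Fin d × Fin d, U (p.1, r.1) (q1, r.2) * star (U (p.2, r.1) (q1, r.2)) := by
      intro q1
      rw [hM, Matrix.mul_apply]
      refine Finset.sum_congr rfl fun r _ => ?_
      simp [hR, realign, Matrix.conjTranspose_apply]
    have key3 : ∀ r1 : Fin d, (∑ s : Fin d × Fin d, U (p.1, r1) s * star (U (p.2, r1) s))
        = if p.1 = p.2 then 1 else 0 := by
      intro r1
      have h1 := congrFun (congrFun hUU (p.1, r1)) (p.2, r1)
      rw [Matrix.mul_apply] at h1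
      simp only [Matrix.conjTranspose_apply] at h1
      rw [h1, Matrix.one_apply]
      by_cases hpp : p.1 = p.2
      · rw [if_pos hpp, if_pos (by rw [hpp])]
      · rw [if_neg hpp, if_neg (by intro h; exact hpp (congrArg Prod.fst h))]
    have key4 : (realign M).mulVec (vecId d) p = (d : ℂ) * vecId d p := by
      rw [key]
      calc ∑ q1 : Fin d, M (p.1, q1) (p.2, q1)
          = ∑ q1 : Fin d, ∑ r : Fin d × Fin d,
              U (p.1, r.1) (q1, r.2) * star (U (p.2, r.1) (q1, r.2)) :=
            Finset.sum_congr rfl fun q1 _ => key2 q1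
        _ = ∑ q1 : Fin d, ∑ r1 : Fin d, ∑ r2 : Fin d,
              U (p.1, r1) (q1, r2) * star (U (p.2, r1) (q1, r2)) := by
            refine Finset.sum_congr rfl fun q1 _ => ?_
            rw [Fintype.sum_prod_type]
        _ = ∑ r1 : Fin d, ∑ q1 : Fin d, ∑ r2 : Fin d,
              U (p.1, r1) (q1, r2) * star (U (p.2, r1) (q1, r2)) := Finset.sum_comm
        _ = ∑ r1 : Fin d, ∑ s : Fin d × Fin d,
              U (p.1, r1) s * star (U (p.2, r1) s) := by
            refine Finset.sum_congr rfl fun r1 _ => ?_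
            rw [Fintype.sum_prod_type]
        _ = ∑ r1 : Fin d, if p.1 = p.2 then (1:ℂ) else 0 :=
            Finset.sum_congr rfl fun r1 _ => key3 r1
        _ = (d : ℂ) * vecId d p := by
            rw [Finset.sum_const, Finset.card_univ, Fintype.card_fin, vecId]
            by_cases hpp : p.1 = p.2 <;> simp [hpp]
    rw [key4]
    field_simp
  refine ⟨hfix, ?_⟩
  -- Part 2
  refine le_trans (schur_bound Ltil) ?_
  set T : ℝ := (M * M).trace.re with hT
  have hMH : Mᴴ = M := by
    rw [hM, Matrix.conjTranspose_mul, Matrix.conjTranspose_conjTranspose]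
  have hfrobM : frobSq M = T := by
    rw [frobSq_eq_trace_re, hT, hMH]
  have hfrobU : frobSq U = (d : ℝ)^2 := by
    rw [frobSq_eq_trace_re, hUU, Matrix.trace_one]
    simp [sq]
  have htrM : M.trace.re = (d : ℝ)^2 := by
    have : M.trace = ∑ x : Fin d × Fin d, ∑ y : Fin d × Fin d, (Complex.normSq (R x y) : ℂ) := by
      rw [Matrix.trace]
      refine Finset.sum_congr rfl fun x _ => ?_
      rw [Matrix.diag_apply, hM, Matrix.mul_apply]
      refine Finset.sum_congr rfl fun y _ => ?_
      rw [Matrix.conjTranspose_apply, show star (R x y) = (starRingEnd ℂ) (R x y) from rfl,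
        Complex.mul_conj]
    rw [this]
    rw [Complex.re_sum]
    have : ∀ x : Fin d × Fin d,
        (∑ y : Fin d × Fin d, (Complex.normSq (R x y) : ℂ)).re
        = ∑ y : Fin d × Fin d, Complex.normSq (R x y) := by
      intro x; rw [Complex.re_sum]; simp
    rw [Finset.sum_congr rfl fun x _ => this x]
    have : ∑ x : Fin d × Fin d, ∑ y : Fin d × Fin d, Complex.normSq (R x y) = frobSq R := rfl
    rw [this, hR, frobSq_realign, hfrobU]
  -- frobSq of Ltil
  have hLtilEntry : ∀ p q, Ltil p q
      = ((1:ℂ)/d) * (realign M p q - vecId d p * vecId d q) := by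
    intro p q
    rw [hLtil, hL]
    simp [Matrix.sub_apply, Matrix.smul_apply, Matrix.vecMulVec_apply, mul_sub]
  have hcross : ∑ p : Fin d × Fin d, ∑ q : Fin d × Fin d,
      (realign M p q * star (vecId d p * vecId d q)).re = (d : ℝ)^2 := by
    have h1 : ∀ (p q : Fin d × Fin d), (realign M p q * star (vecId d p * vecId d q)).re
        = if p.1 = p.2 ∧ q.1 = q.2 then (M (p.1, q.1) (p.2, q.2)).re else 0 := by
      intro p q
      by_cases hp : p.1 = p.2 <;> by_cases hq : q.1 = q.2 <;>
        simp [vecId, hp, hq, realign]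
    rw [Finset.sum_congr rfl fun p _ => Finset.sum_congr rfl fun q _ => h1 p q]
    have h2 : ∀ p : Fin d × Fin d, ∑ q : Fin d × Fin d,
        (if p.1 = p.2 ∧ q.1 = q.2 then (M (p.1, q.1) (p.2, q.2)).re else 0)
        = if p.1 = p.2 then ∑ l : Fin d, (M (p.1, l) (p.2, l)).re else 0 := by
      intro p
      by_cases hp : p.1 = p.2
      · simp only [hp, true_and, if_pos rfl]
        rw [Fintype.sum_prod_type]
        refine Finset.sum_congr rfl fun q1 _ => ?_
        rw [Finset.sum_eq_single q1]
        · rw [if_pos rfl]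
        · intro q2 _ hne; rw [if_neg (Ne.symm hne)]
        · intro h; exact absurd (Finset.mem_univ q1) h
      · simp [hp]
    rw [Finset.sum_congr rfl fun p _ => h2 p]
    rw [Fintype.sum_prod_type]
    have h3 : ∀ k : Fin d, ∑ p2 : Fin d,
        (if k = p2 then ∑ l : Fin d, (M (k, l) (p2, l)).re else 0)
        = ∑ l : Fin d, (M (k, l) (k, l)).re := by
      intro k
      rw [Finset.sum_eq_single k]
      · rw [if_pos rfl]
      · intro p2 _ hne; rw [if_neg (Ne.symm hne)]
      · intro h; exact absurd (Finset.mem_univ k) h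
    rw [Finset.sum_congr rfl fun k _ => h3 k]
    have h4 : ∑ k : Fin d, ∑ l : Fin d, (M (k, l) (k, l)).re = M.trace.re := by
      rw [Matrix.trace, Complex.re_sum, Fintype.sum_prod_type]
      rfl
    rw [h4, htrM]
  have hvsq : ∑ p : Fin d × Fin d, ∑ q : Fin d × Fin d,
      Complex.normSq (vecId d p * vecId d q) = (d : ℝ)^2 := by
    have h1 : ∀ p q : Fin d × Fin d, Complex.normSq (vecId d p * vecId d q)
        = (if p.1 = p.2 then (1:ℝ) else 0) * (if q.1 = q.2 then 1 else 0) := by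
      intro p q
      by_cases hp : p.1 = p.2 <;> by_cases hq : q.1 = q.2 <;> simp [vecId, hp, hq]
    rw [Finset.sum_congr rfl fun p _ => Finset.sum_congr rfl fun q _ => h1 p q]
    rw [← Finset.sum_mul_sum]
    have h2 : ∑ p : Fin d × Fin d, (if p.1 = p.2 then (1:ℝ) else 0) = d := by
      rw [Fintype.sum_prod_type]
      have : ∀ k : Fin d, ∑ p2 : Fin d, (if k = p2 then (1:ℝ) else 0) = 1 := by
        intro k
        rw [Finset.sum_eq_single k]
        · rw [if_pos rfl]
        · intro p2 _ hne; rw [if_neg (Ne.symm hne)]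
        · intro h; exact absurd (Finset.mem_univ k) h
      rw [Finset.sum_congr rfl fun k _ => this k, Finset.sum_const, Finset.card_univ,
        Fintype.card_fin, nsmul_eq_mul, mul_one]
    rw [h2, sq]
  have hfrobLtil : frobSq Ltil = T / (d:ℝ)^2 - 1 := by
    have h0 : frobSq Ltil = ((1:ℝ)/(d:ℝ)^2) * ∑ p : Fin d × Fin d, ∑ q : Fin d × Fin d,
        Complex.normSq (realign M p q - vecId d p * vecId d q) := by
      rw [frobSq, Finset.mul_sum]
      refine Finset.sum_congr rfl fun p _ => ?_
      rw [Finset.mul_sum]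
      refine Finset.sum_congr rfl fun q _ => ?_
      rw [hLtilEntry p q, Complex.normSq_mul]
      congr 1
      rw [Complex.normSq_div]
      simp [Complex.normSq]
      ring
    rw [h0]
    have h1 : ∑ p : Fin d × Fin d, ∑ q : Fin d × Fin d,
        Complex.normSq (realign M p q - vecId d p * vecId d q)
        = frobSq (realign M) + (d:ℝ)^2 - 2 * (d:ℝ)^2 := by
      have expand : ∀ p q : Fin d × Fin d,
          Complex.normSq (realign M p q - vecId d p * vecId d q)
          = Complex.normSq (realign M p q) + Complex.normSq (vecId d p * vecId d q)
            - 2 * (realign M p q * star (vecId d p * vecId d q)).re := by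
        intro p q
        exact Complex.normSq_sub _ _
      rw [Finset.sum_congr rfl fun p _ => Finset.sum_congr rfl fun q _ => expand p q]
      simp only [Finset.sum_sub_distrib, Finset.sum_add_distrib, ← Finset.mul_sum]
      rw [hcross, hvsq, frobSq]
    rw [h1, frobSq_realign, hfrobM]
    field_simp
    ring
  rw [hfrobLtil]
  -- final arithmetic
  rcases eq_or_lt_of_le (Nat.one_le_iff_ne_zero.mpr hd.ne') with h1 | h2
  · -- d = 1
    have hd1 : d = 1 := h1.symm
    subst hd1
    have hT1 : T = 1 := by
      have hsum : ∀ (f : (Fin 1 × Fin 1) → ℂ), (∑ x : Fin 1 × Fin 1, f x) = f (0,0) := by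
        intro f
        rw [show (Finset.univ : Finset (Fin 1 × Fin 1)) = {((0:Fin 1),(0:Fin 1))} by decide,
          Finset.sum_singleton]
      have e : ∀ (N P : Matrix (Fin 1 × Fin 1) (Fin 1 × Fin 1) ℂ),
          (N * P) (0,0) (0,0) = N (0,0) (0,0) * P (0,0) (0,0) := by
        intro N P
        rw [Matrix.mul_apply, hsum]
      have htr : ∀ (N : Matrix (Fin 1 × Fin 1) (Fin 1 × Fin 1) ℂ),
          N.trace = N (0,0) (0,0) := by
        intro N
        rw [Matrix.trace, show (Finset.univ : Finset (Fin 1 × Fin 1))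
          = {((0:Fin 1),(0:Fin 1))} by decide, Finset.sum_singleton, Matrix.diag_apply]
      have hu := congrFun (congrFun hU ((0:Fin 1),(0:Fin 1))) ((0:Fin 1),(0:Fin 1))
      rw [Matrix.mul_apply, hsum, Matrix.conjTranspose_apply, Matrix.one_apply_eq] at hu
      have hMdd : M ((0:Fin 1),(0:Fin 1)) ((0:Fin 1),(0:Fin 1)) = 1 := by
        rw [hM, e, Matrix.conjTranspose_apply]
        have hRdd : R ((0:Fin 1),(0:Fin 1)) ((0:Fin 1),(0:Fin 1))
            = U ((0:Fin 1),(0:Fin 1)) ((0:Fin 1),(0:Fin 1)) := rfl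
        rw [hRdd, mul_comm]
        exact hu
      rw [hT, htr, e, hMdd, mul_one]
      rfl
    rw [hT1]
    norm_num [opEnt]
  · -- d ≥ 2
    have hgt : (1:ℝ) < (d:ℝ) := by exact_mod_cast h2
    have hne : (d:ℝ)^2 - 1 ≠ 0 := by nlinarith
    have hTt : T = (realign U * (realign U)ᴴ * (realign U * (realign U)ᴴ)).trace.re := rfl
    have hrhs : ((d:ℝ)^2 - 1) * (1 - opEnt U) = T / (d:ℝ)^2 - 1 := by
      rw [opEnt, ← hTt]
      field_simp
      ring
    rw [hrhs]
end
end

section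
/- With the notation above, if the operator entanglement satisfies E(U) > (d²−2)/(d²−1), then every nontrivial eigenvalue of the channel matrix L satisfies |λᵢ| < 1 for i ≥ 1; hence the channel E(ρ) = Tr₂[U(ρ⊗I/d)U†] is mixing (has a unique fixed state and all other spectral moduli strictly below 1). -/
open Matrix
open scoped ComplexOrder

/-- The vectorization `|A⟩` of a matrix, with `⟨ij|A⟩ = ⟨i|A|j⟩`. -/
def vecOf {d : ℕ} (A : Matrix (Fin d) (Fin d) ℂ) : Fin d × Fin d → ℂ :=
  fun p => A p.1 p.2

open Polynomial

lemma eval_charpoly_det {n : Type*} [Fintype n] [DecidableEq n] (A : Matrix n n ℂ) (x : ℂ) :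
    A.charpoly.eval x = (x • (1 : Matrix n n ℂ) - A).det := by
  rw [Matrix.charpoly, ← Polynomial.coe_evalRingHom, RingHom.map_det]
  congr 1
  ext i j
  by_cases h : i = j <;>
    simp [h, Matrix.charmatrix_apply, Matrix.diagonal_apply, Matrix.one_apply, Matrix.smul_apply,
      Matrix.sub_apply]

lemma sum4_swap {M : Type*} [AddCommMonoid M] {d : ℕ} (f : Fin d → Fin d → Fin d → Fin d → M) :
    ∑ p : Fin d × Fin d, ∑ q : Fin d × Fin d, f p.1 p.2 q.1 q.2
      = ∑ p : Fin d × Fin d, ∑ q : Fin d × Fin d, f p.1 q.1 p.2 q.2 := by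
  rw [← Fintype.sum_prod_type', ← Fintype.sum_prod_type']
  exact Fintype.sum_equiv (Equiv.prodProdProdComm _ _ _ _) _ _ (fun x => rfl)

lemma herm_trace_sq {n : Type*} [Fintype n] (N : Matrix n n ℂ) (hN : Nᴴ = N) :
    ((N * N).trace).re = ∑ p, ∑ q, Complex.normSq (N p q) := by
  have h : ∀ p q, N q p = (starRingEnd ℂ) (N p q) := by
    intro p q
    conv_lhs => rw [← hN]
    simp [Matrix.conjTranspose_apply]
  have : (N * N).trace = ∑ p, ∑ q, (Complex.normSq (N p q) : ℂ) := by
    simp only [Matrix.trace, Matrix.diag, Matrix.mul_apply]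
    exact Finset.sum_congr rfl fun p _ => Finset.sum_congr rfl fun q _ => by
      rw [h p q, Complex.mul_conj]
  rw [this]
  simp [Complex.re_sum]

lemma eig_bound {n : Type*} [Fintype n] [DecidableEq n] (A : Matrix n n ℂ) (lam : ℂ)
    (hlam : lam ∈ A.charpoly.roots) :
    Complex.normSq lam ≤ ∑ p, ∑ q, Complex.normSq (A p q) := by
  have hroot : A.charpoly.eval lam = 0 := (Polynomial.mem_roots'.mp hlam).2
  have hdet : (lam • (1 : Matrix n n ℂ) - A).det = 0 := by rw [← eval_charpoly_det]; exact hroot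
  obtain ⟨v, hv0, hv⟩ := (Matrix.exists_mulVec_eq_zero_iff).mpr hdet
  have hAv : A.mulVec v = lam • v := by
    rw [Matrix.sub_mulVec, Matrix.smul_mulVec, Matrix.one_mulVec, sub_eq_zero] at hv
    exact hv.symm
  have key : ∀ p, Complex.normSq lam * Complex.normSq (v p)
      ≤ (∑ q, Complex.normSq (A p q)) * (∑ q, Complex.normSq (v q)) := by
    intro p
    have h1 : lam * v p = ∑ q, A p q * v q := by
      have := congrFun hAv p
      simpa [Matrix.mulVec, dotProduct] using this.symm
    have h2 : ‖lam * v p‖ ≤ ∑ q, ‖A p q‖ * ‖v q‖ := by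
      rw [h1]
      refine le_trans (norm_sum_le _ _) (le_of_eq ?_)
      exact Finset.sum_congr rfl fun q _ => by
        rw [norm_mul]
    have h3 : (∑ q, ‖A p q‖ * ‖v q‖) ^ 2
        ≤ (∑ q, ‖A p q‖ ^ 2) * (∑ q, ‖v q‖ ^ 2) :=
      Finset.sum_mul_sq_le_sq_mul_sq _ _ _
    calc Complex.normSq lam * Complex.normSq (v p)
        = (‖lam * v p‖) ^ 2 := by
          rw [norm_mul, mul_pow, Complex.sq_norm, Complex.sq_norm]
      _ ≤ (∑ q, ‖A p q‖ * ‖v q‖) ^ 2 := by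
          exact pow_le_pow_left₀ (norm_nonneg _) h2 2
      _ ≤ (∑ q, ‖A p q‖ ^ 2) * (∑ q, ‖v q‖ ^ 2) := h3
      _ = (∑ q, Complex.normSq (A p q)) * (∑ q, Complex.normSq (v q)) := by
          simp [Complex.sq_norm]
  have hsum := Finset.sum_le_sum (fun p (_ : p ∈ Finset.univ) => key p)
  rw [← Finset.mul_sum] at hsum
  rw [← Finset.sum_mul] at hsum
  have hS : 0 < ∑ q, Complex.normSq (v q) := by
    obtain ⟨p, hp⟩ := Function.ne_iff.mp hv0
    exact Finset.sum_pos' (fun q _ => Complex.normSq_nonneg _)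
      ⟨p, Finset.mem_univ p, Complex.normSq_pos.mpr hp⟩
  exact le_of_mul_le_mul_right hsum hS

lemma trace_AAH {n : Type*} [Fintype n] (A : Matrix n n ℂ) :
    (A * Aᴴ).trace = ((∑ p, ∑ q, Complex.normSq (A p q) : ℝ) : ℂ) := by
  have : (A * Aᴴ).trace = ∑ p, ∑ q, (Complex.normSq (A p q) : ℂ) := by
    simp only [Matrix.trace, Matrix.diag, Matrix.mul_apply, Matrix.conjTranspose_apply]
    exact Finset.sum_congr rfl fun p _ => Finset.sum_congr rfl fun q _ => by
      rw [show (star (A p q) : ℂ) = (starRingEnd ℂ) (A p q) from rfl, Complex.mul_conj]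
  rw [this]
  push_cast
  rfl

lemma step_lemma {d : ℕ} (U : Matrix (Fin d × Fin d) (Fin d × Fin d) ℂ) (hUU : U * Uᴴ = 1)
    (i j : Fin d) :
    ∑ α : Fin d, (realign U * (realign U)ᴴ) (i, α) (j, α)
      = (d : ℂ) * (if i = j then 1 else 0) := by
  have e1 : ∀ α, (realign U * (realign U)ᴴ) (i, α) (j, α)
      = ∑ k, ∑ l, U (i,k) (α,l) * star (U (j,k) (α,l)) := by
    intro α
    rw [Matrix.mul_apply, Fintype.sum_prod_type]
    rfl
  simp_rw [e1]
  rw [Finset.sum_comm]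
  have e2 : ∀ k, ∑ α : Fin d, ∑ l, U (i,k) (α,l) * star (U (j,k) (α,l))
      = (U * Uᴴ) (i,k) (j,k) := by
    intro k
    rw [Matrix.mul_apply, Fintype.sum_prod_type]
    rfl
  simp_rw [e2, hUU]
  by_cases h : i = j
  · simp [h, Matrix.one_apply]
  · simp [Matrix.one_apply, Prod.ext_iff, h]

/-- If the operator entanglement of a unitary `U` exceeds `(d²−2)/(d²−1)`, then
every nontrivial eigenvalue of the channel matrix `L = (1/d)[U^{R₂}U^{R₂†}]^{R₂}`
(i.e. every eigenvalue of `L̃ = L − |I⟩⟨I|/d`) has modulus strictly less than `1`;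
hence the channel `E(ρ) = Tr₂[U(ρ⊗I/d)U†]` is mixing: it has a unique fixed
density matrix. -/
theorem opEnt_gt_implies_mixing (d : ℕ) (hd : 0 < d)
    (U : Matrix (Fin d × Fin d) (Fin d × Fin d) ℂ)
    (hU : Uᴴ * U = 1)
    (L : Matrix (Fin d × Fin d) (Fin d × Fin d) ℂ)
    (hL : L = ((1 : ℂ) / d) • realign (realign U * (realign U)ᴴ))
    (Ltil : Matrix (Fin d × Fin d) (Fin d × Fin d) ℂ)
    (hLtil : Ltil = L - ((1 : ℂ) / d) • Matrix.vecMulVec (vecId d) (vecId d))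
    (hE : opEnt U > ((d : ℝ) ^ 2 - 2) / ((d : ℝ) ^ 2 - 1)) :
    (∀ lam ∈ Ltil.charpoly.roots, ‖lam‖ < 1) ∧
    (∃! ρ : Matrix (Fin d) (Fin d) ℂ,
      ρ.PosSemidef ∧ ρ.trace = 1 ∧ L.mulVec (vecOf ρ) = vecOf ρ) := by
  -- d ≥ 2
  have hd2 : 2 ≤ d := by
    by_contra h
    interval_cases d
    rw [opEnt] at hE
    norm_num at hE
  -- notation
  set Rm := realign U with hRm
  set M := Rm * Rmᴴ with hM
  set T : ℝ := ((M * M).trace).re with hT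
  have hdC : (d : ℂ) ≠ 0 := Nat.cast_ne_zero.mpr hd.ne'
  have hUU : U * Uᴴ = 1 := mul_eq_one_comm.mp hU
  have hD1 : (0:ℝ) < (d:ℝ)^2 - 1 := by
    have : (2:ℝ) ≤ (d:ℝ) := by exact_mod_cast hd2
    nlinarith
  have hD0 : (0:ℝ) < (d:ℝ)^2 := by positivity
  -- T < 2 d^2
  have hTlt : T < 2 * (d:ℝ)^2 := by
    rw [opEnt] at hE
    have h2 := mul_lt_mul_of_pos_right hE hD1
    have e1 : (d:ℝ)^2/((d:ℝ)^2-1) * (1 - 1/(d:ℝ)^4 * T) * ((d:ℝ)^2-1)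
        = (d:ℝ)^2 * (1 - 1/(d:ℝ)^4 * T) := by field_simp
    have e2 : ((d:ℝ)^2-2)/((d:ℝ)^2-1) * ((d:ℝ)^2-1) = (d:ℝ)^2-2 := by field_simp
    rw [e1, e2] at h2
    have e3 : (d:ℝ)^2 * (1 - 1/(d:ℝ)^4 * T) = (d:ℝ)^2 - T/(d:ℝ)^2 := by
      field_simp
    rw [e3] at h2
    have h4 : T / (d:ℝ)^2 < 2 := by linarith
    calc T = T / (d:ℝ)^2 * (d:ℝ)^2 := by field_simp
      _ < 2 * (d:ℝ)^2 := by exact mul_lt_mul_of_pos_right h4 hD0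
  -- trace of M is d^2
  have htrM : M.trace = ((((d:ℝ)^2 : ℝ)) : ℂ) := by
    rw [hM, trace_AAH]
    have hs : (∑ p, ∑ q, Complex.normSq (Rm p q)) = ∑ p, ∑ q, Complex.normSq (U p q) := by
      have := sum4_swap (fun i j α β => Complex.normSq (U (i, α) (j, β)))
      simpa [hRm, realign] using this
    have h5 : (∑ p, ∑ q, Complex.normSq (U p q)) = ((Fintype.card (Fin d × Fin d) : ℝ)) := by
      have h6 := trace_AAH U
      rw [hUU, Matrix.trace_one] at h6
      exact_mod_cast h6.symm
    rw [hs, h5]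
    simp only [Fintype.card_prod, Fintype.card_fin]
    push_cast
    ring
  -- Hermitian facts
  have hMH : Mᴴ = M := Matrix.isHermitian_mul_conjTranspose_self Rm
  have hNH : (M - 1)ᴴ = M - 1 := by
    rw [Matrix.conjTranspose_sub, hMH, Matrix.conjTranspose_one]
  -- Frobenius norm of Ltil
  have hLtil_apply : ∀ p q, Ltil p q = ((1:ℂ)/d) * ((M - 1) (p.1, q.1) (p.2, q.2)) := by
    intro p q
    rw [hLtil, hL]
    simp only [Matrix.sub_apply, Matrix.smul_apply, Matrix.vecMulVec_apply, smul_eq_mul,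
      realign, Matrix.of_apply, vecId]
    rw [mul_sub]
    congr 1
    have : (1 : Matrix (Fin d × Fin d) (Fin d × Fin d) ℂ) (p.1, q.1) (p.2, q.2)
        = (if p.1 = p.2 then (1:ℂ) else 0) * (if q.1 = q.2 then 1 else 0) := by
      by_cases h1 : p.1 = p.2 <;> by_cases h2 : q.1 = q.2 <;>
        simp [Matrix.one_apply, Prod.ext_iff, h1, h2]
    rw [this]
  have hFrob : (∑ p, ∑ q, Complex.normSq (Ltil p q)) = (T - (d:ℝ)^2) / (d:ℝ)^2 := by
    have e1 : (∑ p : Fin d × Fin d, ∑ q : Fin d × Fin d, Complex.normSq (Ltil p q))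
        = (1/(d:ℝ)^2) * ∑ p : Fin d × Fin d, ∑ q : Fin d × Fin d,
            Complex.normSq ((M - 1) (p.1, q.1) (p.2, q.2)) := by
      rw [Finset.mul_sum]
      refine Finset.sum_congr rfl fun p _ => ?_
      rw [Finset.mul_sum]
      refine Finset.sum_congr rfl fun q _ => ?_
      rw [hLtil_apply p q, Complex.normSq_mul]
      congr 1
      rw [Complex.normSq_div, Complex.normSq_one, Complex.normSq_natCast]
      ring
    have e2 : (∑ p : Fin d × Fin d, ∑ q : Fin d × Fin d,
          Complex.normSq ((M - 1) (p.1, q.1) (p.2, q.2)))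
        = ∑ p : Fin d × Fin d, ∑ q : Fin d × Fin d, Complex.normSq ((M - 1) p q) := by
      have := sum4_swap (fun i j α β => Complex.normSq ((M - 1) (i, α) (j, β)))
      simpa using this
    have e3 : (∑ p : Fin d × Fin d, ∑ q : Fin d × Fin d, Complex.normSq ((M - 1) p q))
        = T - (d:ℝ)^2 := by
      rw [← herm_trace_sq (M - 1) hNH]
      have expand : (M - 1) * (M - 1) = M * M - M - M + 1 := by noncomm_ring
      rw [expand]
      rw [Matrix.trace_add, Matrix.trace_sub, Matrix.trace_sub, Matrix.trace_one, htrM]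
      have hcard : ((Fintype.card (Fin d × Fin d) : ℕ) : ℂ) = ((((d:ℝ)^2 : ℝ)) : ℂ) := by
        simp only [Fintype.card_prod, Fintype.card_fin]
        push_cast
        ring
      rw [hcard]
      simp only [Complex.add_re, Complex.sub_re, Complex.ofReal_re]
      ring
    rw [e1, e2, e3]
    ring
  have hFlt : (∑ p, ∑ q, Complex.normSq (Ltil p q)) < 1 := by
    rw [hFrob, div_lt_one hD0]
    linarith
  -- Part 1
  have part1 : ∀ lam ∈ Ltil.charpoly.roots, ‖lam‖ < 1 := by
    intro lam hlam
    have h := lt_of_le_of_lt (eig_bound Ltil lam hlam) hFlt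
    nlinarith [Complex.sq_norm lam, norm_nonneg lam]
  refine ⟨part1, ?_⟩
  -- vecOf facts
  have hvecOf_smul_one : vecOf (((1:ℂ)/d) • (1 : Matrix (Fin d) (Fin d) ℂ))
      = ((1:ℂ)/d) • vecId d := by
    funext p
    simp [vecOf, vecId, Matrix.one_apply]
  -- L fixes vecId
  have hLvecId : L.mulVec (vecId d) = vecId d := by
    funext p
    rw [hL, Matrix.smul_mulVec]
    have key : (realign M).mulVec (vecId d) p = (d:ℂ) * vecId d p := by
      obtain ⟨i, j⟩ := p
      simp only [Matrix.mulVec, dotProduct, vecId, realign, Matrix.of_apply]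
      rw [Fintype.sum_prod_type]
      simp only [mul_ite, mul_one, mul_zero, Finset.sum_ite_eq]
      simp only [Finset.mem_univ, if_true]
      simpa [mul_ite] using step_lemma U hUU i j
    simp only [Pi.smul_apply, smul_eq_mul]
    rw [key]
    field_simp
  -- dot product with vecId is trace
  have hdot : ∀ σ : Matrix (Fin d) (Fin d) ℂ,
      dotProduct (vecId d) (vecOf σ) = σ.trace := by
    intro σ
    simp only [dotProduct, vecId, vecOf, Matrix.trace, Matrix.diag]
    rw [Fintype.sum_prod_type]
    simp [Finset.sum_ite_eq]
  -- vecMulVec action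
  have hvmv : ∀ x : Fin d × Fin d → ℂ,
      (Matrix.vecMulVec (vecId d) (vecId d)).mulVec x
        = (dotProduct (vecId d) x) • vecId d := by
    intro x
    funext p
    simp only [Matrix.mulVec, dotProduct, Matrix.vecMulVec_apply, Pi.smul_apply,
      smul_eq_mul]
    simp_rw [mul_assoc]
    rw [← Finset.mul_sum, mul_comm]
  -- the reference state
  set ρ₀ : Matrix (Fin d) (Fin d) ℂ := ((1:ℂ)/d) • (1 : Matrix (Fin d) (Fin d) ℂ) with hρ₀
  have hρ₀psd : ρ₀.PosSemidef := by
    rw [Matrix.posSemidef_iff_dotProduct_mulVec]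
    constructor
    · rw [hρ₀]
      rw [Matrix.IsHermitian]
      rw [Matrix.conjTranspose_smul, Matrix.conjTranspose_one]
      congr 1
      simp [Complex.ext_iff]
    · intro x
      rw [hρ₀, Matrix.smul_mulVec, Matrix.one_mulVec]
      rw [dotProduct_smul]
      refine smul_nonneg ?_ (dotProduct_star_self_nonneg x)
      have h7 : ((1:ℂ)/d) = (((1/(d:ℝ)) : ℝ) : ℂ) := by push_cast; ring
      rw [h7, Complex.zero_le_real]
      positivity
  have hρ₀tr : ρ₀.trace = 1 := by
    rw [hρ₀, Matrix.trace_smul, Matrix.trace_one]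
    simp
    field_simp
  have hρ₀fix : L.mulVec (vecOf ρ₀) = vecOf ρ₀ := by
    rw [hρ₀, hvecOf_smul_one, Matrix.mulVec_smul, hLvecId]
  refine ⟨ρ₀, ⟨hρ₀psd, hρ₀tr, hρ₀fix⟩, ?_⟩
  -- uniqueness
  rintro ρ ⟨hpsd, htr, hfix⟩
  by_contra hne
  set w : Fin d × Fin d → ℂ := vecOf ρ - vecOf ρ₀ with hw
  have hw0 : w ≠ 0 := by
    intro h
    apply hne
    ext i j
    have := congrFun h (i, j)
    simp only [hw, Pi.sub_apply, Pi.zero_apply, sub_eq_zero, vecOf] at this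
    exact this
  have haction : ∀ σ : Matrix (Fin d) (Fin d) ℂ, σ.trace = 1 →
      L.mulVec (vecOf σ) = vecOf σ →
      Ltil.mulVec (vecOf σ) = vecOf σ - ((1:ℂ)/d) • vecId d := by
    intro σ htrσ hfixσ
    rw [hLtil, Matrix.sub_mulVec, hfixσ, Matrix.smul_mulVec, hvmv, hdot, htrσ, one_smul]
  have hwfix : Ltil.mulVec w = w := by
    rw [hw, Matrix.mulVec_sub, haction ρ htr hfix, haction ρ₀ hρ₀tr hρ₀fix]
    abel
  have hone : (1:ℂ) ∈ Ltil.charpoly.roots := by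
    rw [Polynomial.mem_roots']
    refine ⟨Ltil.charpoly_monic.ne_zero, ?_⟩
    rw [Polynomial.IsRoot, eval_charpoly_det]
    rw [← Matrix.exists_mulVec_eq_zero_iff]
    refine ⟨w, hw0, ?_⟩
    rw [Matrix.sub_mulVec, Matrix.smul_mulVec, Matrix.one_mulVec, hwfix, one_smul, sub_self]
  have := part1 1 hone
  simp at this
end

section
/- If U is dual-unitary, i.e., U^{R₂} U^{R₂†} = I, then the channel E(ρ) = Tr₂[U(ρ⊗σ)U†] with environment state σ satisfies Σ_{i=1}^{d²−1}|λᵢ|² ≤ d·Tr(σ²) − 1 for its nontrivial eigenvalues; in particular, if Tr(σ²) < 2/d then |λ₁| < 1 and the channel is mixing. -/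
open Matrix
open scoped Kronecker ComplexOrder

section aux
open Polynomial

lemma my_eval_charpoly {n : Type*} [Fintype n] [DecidableEq n] (M : Matrix n n ℂ) (r : ℂ) :
    M.charpoly.eval r = (Matrix.scalar n r - M).det := by
  rw [Matrix.charpoly, eval_det, matPolyEquiv_charmatrix]; simp

lemma my_frob {n : Type*} [Fintype n] (M : Matrix n n ℂ) :
    Matrix.trace (Mᴴ * M) = ((∑ i, ∑ j, ‖M i j‖ ^ 2 : ℝ) : ℂ) := by
  have h : ∀ z : ℂ, star z * z = ((‖z‖ : ℂ)) ^ 2 := fun z => by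
    rw [mul_comm, show (star z : ℂ) = (starRingEnd ℂ) z from rfl, Complex.mul_conj]
    norm_cast
    exact (Complex.sq_norm z).symm
  simp only [Matrix.trace, Matrix.diag, Matrix.mul_apply, Matrix.conjTranspose_apply, h]
  push_cast
  rw [Finset.sum_comm]

lemma my_charpoly_conj {n : Type*} [Fintype n] [DecidableEq n] (W A : Matrix n n ℂ)
    (hW : Wᴴ * W = 1) : (Wᴴ * A * W).charpoly = A.charpoly := by
  have hmap : ∀ (P Q : Matrix n n ℂ), (P * Q).map (C : ℂ →+* ℂ[X]) = P.map C * Q.map C :=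
    fun P Q => Matrix.map_mul
  have hcm : charmatrix (Wᴴ * A * W) = (Wᴴ).map C * charmatrix A * W.map C := by
    rw [charmatrix, charmatrix]
    have hsc : Matrix.scalar n (X : ℂ[X]) = (X : ℂ[X]) • (1 : Matrix n n ℂ[X]) := by
      simp [Matrix.scalar, Matrix.smul_one_eq_diagonal]
    simp only [RingHom.mapMatrix_apply]
    rw [hsc, mul_sub, sub_mul]
    congr 1
    · rw [mul_smul_comm, mul_one, smul_mul_assoc, ← hmap, hW]
      simp
    · rw [← hmap, ← hmap]
  rw [Matrix.charpoly, Matrix.charpoly, hcm, Matrix.det_mul, Matrix.det_mul]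
  have h1 : (Wᴴ).map (C : ℂ →+* ℂ[X]) * W.map C = 1 := by rw [← hmap, hW]; simp
  have hdet : (Wᴴ.map (C : ℂ →+* ℂ[X])).det * (W.map C).det = 1 := by
    rw [← Matrix.det_mul, h1, Matrix.det_one]
  calc (Wᴴ.map C).det * (charmatrix A).det * (W.map C).det
      = (charmatrix A).det * ((Wᴴ.map C).det * (W.map C).det) := by ring
    _ = (charmatrix A).det := by rw [hdet, mul_one]

lemma my_schur_fin (n : ℕ) :
    ∀ A : Matrix (Fin n) (Fin n) ℂ,
      ((A.charpoly.roots).map fun z => ‖z‖ ^ 2).sum ≤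
        ∑ i, ∑ j, ‖A i j‖ ^ 2 := by
  induction n with
  | zero =>
    intro A
    have h1 : A.charpoly = 1 := by rw [Matrix.charpoly]; exact Matrix.det_isEmpty
    simp [h1]
  | succ n ih =>
    intro A
    -- find an eigenvalue
    have hdeg : 0 < A.charpoly.degree := by
      rw [Matrix.charpoly_degree_eq_dim]
      simp only [Fintype.card_fin]
      exact_mod_cast Nat.succ_pos n
    obtain ⟨μ, hμ⟩ := Complex.exists_root hdeg
    have hdet : (Matrix.scalar (Fin (n+1)) μ - A).det = 0 := by
      rw [← my_eval_charpoly]; exact hμ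
    obtain ⟨v, hv, hvec⟩ := Matrix.exists_mulVec_eq_zero_iff.mpr hdet
    have hsc : Matrix.scalar (Fin (n+1)) μ = μ • (1 : Matrix (Fin (n+1)) (Fin (n+1)) ℂ) := by
      simp [Matrix.scalar, Matrix.smul_one_eq_diagonal]
    have hAv : A *ᵥ v = μ • v := by
      have := hvec
      rw [Matrix.sub_mulVec, hsc, Matrix.smul_mulVec, Matrix.one_mulVec, sub_eq_zero] at this
      exact this.symm
    -- build a unitary with first column the normalized eigenvector
    set E := EuclideanSpace ℂ (Fin (n+1))
    let v' : E := WithLp.toLp 2 (fun i => v i)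
    have hv' : v' ≠ 0 := by
      intro h
      exact hv (funext fun i => by simpa [v'] using congrArg (fun x : E => x i) h)
    let u : E := (‖v'‖⁻¹ : ℂ) • v'
    have hu : ‖u‖ = 1 := norm_smul_inv_norm hv'
    have horth : Orthonormal ℂ (Set.restrict ({0} : Set (Fin (n+1))) fun _ => u) := by
      constructor
      · intro i; exact hu
      · intro i j hij
        exfalso
        exact hij (Subtype.ext (i.2.trans j.2.symm))
    have hcard : Module.finrank ℂ E = Fintype.card (Fin (n+1)) := by
      simp [E, finrank_euclideanSpace]
    obtain ⟨b, hb⟩ := horth.exists_orthonormalBasis_extension_of_card_eq hcard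
    have hb0 : b 0 = u := hb 0 rfl
    set W : Matrix (Fin (n+1)) (Fin (n+1)) ℂ := Matrix.of fun i j => b j i with hWdef
    have hW : Wᴴ * W = 1 := by
      ext i j
      have h := orthonormal_iff_ite.mp b.orthonormal i j
      rw [PiLp.inner_apply] at h
      simpa [Matrix.mul_apply, Matrix.conjTranspose_apply, Matrix.one_apply, hWdef,
        RCLike.inner_apply, mul_comm] using h
    have hWW : W * Wᴴ = 1 := mul_eq_one_comm.mp hW
    set B := Wᴴ * A * W with hBdef
    -- the first column of B
    have hW0 : ∀ j, W j 0 = (‖v'‖⁻¹ : ℂ) * v j := by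
      intro j
      show b 0 j = _
      rw [hb0]
      rfl
    have hAW : ∀ k, (A * W) k 0 = μ * W k 0 := by
      intro k
      have hk : ∑ j, A k j * v j = μ * v k := by
        have := congrFun hAv k
        simpa [Matrix.mulVec, dotProduct] using this
      calc (A * W) k 0 = ∑ j, A k j * ((‖v'‖⁻¹ : ℂ) * v j) := by
              simp [Matrix.mul_apply, hW0]
        _ = (‖v'‖⁻¹ : ℂ) * ∑ j, A k j * v j := by
              rw [Finset.mul_sum]; exact Finset.sum_congr rfl fun j _ => by ring
        _ = μ * W k 0 := by rw [hk, hW0]; ring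
    have hcol : ∀ i, B i 0 = if i = 0 then μ else 0 := by
      intro i
      have : B i 0 = μ * (Wᴴ * W) i 0 := by
        rw [hBdef, Matrix.mul_assoc, Matrix.mul_apply, Matrix.mul_apply, Finset.mul_sum]
        exact Finset.sum_congr rfl fun k _ => by rw [hAW k]; ring
      rw [this, hW, Matrix.one_apply]
      simp
    set A' := B.submatrix Fin.succ Fin.succ with hA'def
    have hsubchar : (charmatrix B).submatrix Fin.succ Fin.succ = charmatrix A' := by
      ext i j
      by_cases h : i = j
      · subst h
        simp [Matrix.submatrix_apply, charmatrix_apply_eq, hA'def]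
      · have h' : Fin.succ i ≠ Fin.succ j := fun hc => h (Fin.succ_injective n hc)
        simp [Matrix.submatrix_apply, charmatrix_apply_ne _ _ _ h',
          charmatrix_apply_ne _ _ _ h, hA'def]
    have hcharB : B.charpoly = (X - C μ) * A'.charpoly := by
      rw [Matrix.charpoly, Matrix.det_succ_column_zero]
      rw [Finset.sum_eq_single 0]
      · have h00 : charmatrix B 0 0 = X - C μ := by
          rw [charmatrix_apply_eq, hcol 0]; simp
        rw [h00, Fin.succAbove_zero, hsubchar]
        simp [Matrix.charpoly]
      · intro i _ hi
        rw [charmatrix_apply_ne _ _ _ hi, hcol i]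
        simp [hi]
      · intro h
        exact absurd (Finset.mem_univ 0) h
    have hchB : B.charpoly = A.charpoly := my_charpoly_conj W A hW
    have hroots : A.charpoly.roots = μ ::ₘ A'.charpoly.roots := by
      rw [← hchB, hcharB, Polynomial.roots_mul, Polynomial.roots_X_sub_C,
        Multiset.singleton_add]
      exact mul_ne_zero (Polynomial.X_sub_C_ne_zero μ) (Matrix.charpoly_monic A').ne_zero
    have htr : Matrix.trace (Bᴴ * B) = Matrix.trace (Aᴴ * A) := by
      have e1 : Bᴴ = Wᴴ * Aᴴ * W := by
        rw [hBdef]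
        simp [Matrix.conjTranspose_mul, Matrix.mul_assoc]
      have hWW' : ∀ M : Matrix (Fin (n+1)) (Fin (n+1)) ℂ, W * (Wᴴ * M) = M := fun M => by
        rw [← Matrix.mul_assoc, hWW, Matrix.one_mul]
      calc Matrix.trace (Bᴴ * B) = Matrix.trace (Wᴴ * (Aᴴ * (A * W))) := by
            rw [e1, hBdef]
            simp only [Matrix.mul_assoc, hWW']
        _ = Matrix.trace ((Aᴴ * (A * W)) * Wᴴ) := Matrix.trace_mul_comm _ _
        _ = Matrix.trace (Aᴴ * A) := by
            simp only [Matrix.mul_assoc, hWW, Matrix.mul_one]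
    have hfrob : (∑ i, ∑ j, ‖B i j‖ ^ 2) = ∑ i, ∑ j, ‖A i j‖ ^ 2 := by
      have hc : ((∑ i, ∑ j, ‖B i j‖ ^ 2 : ℝ) : ℂ)
          = ((∑ i, ∑ j, ‖A i j‖ ^ 2 : ℝ) : ℂ) := by
        rw [← my_frob B, ← my_frob A, htr]
      exact_mod_cast hc
    have hdec : ‖B 0 0‖ ^ 2 + ∑ i : Fin n, ∑ j : Fin n, ‖A' i j‖ ^ 2 ≤
        ∑ i, ∑ j, ‖B i j‖ ^ 2 := by
      rw [Fin.sum_univ_succ (f := fun i => ∑ j, ‖B i j‖ ^ 2)]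
      have h1 : ‖B 0 0‖ ^ 2 ≤ ∑ j, ‖B 0 j‖ ^ 2 :=
        Finset.single_le_sum (f := fun j : Fin (n+1) => ‖B 0 j‖ ^ 2)
          (fun j _ => sq_nonneg _) (Finset.mem_univ 0)
      have h2 : ∀ i : Fin n, ∑ j : Fin n, ‖A' i j‖ ^ 2 ≤
          ∑ j : Fin (n+1), ‖B i.succ j‖ ^ 2 := by
        intro i
        rw [Fin.sum_univ_succ (f := fun j => ‖B i.succ j‖ ^ 2)]
        have he : ∑ j : Fin n, ‖A' i j‖ ^ 2
            = ∑ j : Fin n, ‖B i.succ j.succ‖ ^ 2 := rfl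
        rw [he]
        exact le_add_of_nonneg_left (sq_nonneg _)
      exact add_le_add h1 (Finset.sum_le_sum fun i _ => h2 i)
    have hB00 : ‖B 0 0‖ ^ 2 = ‖μ‖ ^ 2 := by rw [hcol 0]; simp
    calc ((A.charpoly.roots).map fun z => ‖z‖ ^ 2).sum
        = ‖μ‖ ^ 2 + ((A'.charpoly.roots).map fun z => ‖z‖ ^ 2).sum := by
          rw [hroots, Multiset.map_cons, Multiset.sum_cons]
      _ ≤ ‖μ‖ ^ 2 + ∑ i, ∑ j, ‖A' i j‖ ^ 2 :=
          add_le_add_right (ih A') _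
      _ ≤ ∑ i, ∑ j, ‖B i j‖ ^ 2 := by rw [← hB00]; exact hdec
      _ = ∑ i, ∑ j, ‖A i j‖ ^ 2 := hfrob

lemma my_schur {ι : Type*} [Fintype ι] [DecidableEq ι] (A : Matrix ι ι ℂ) :
    ((A.charpoly.roots).map fun z => ‖z‖ ^ 2).sum ≤
      ∑ i, ∑ j, ‖A i j‖ ^ 2 := by
  classical
  let e := Fintype.equivFin ι
  have h := my_schur_fin (Fintype.card ι) ((Matrix.reindex e e) A)
  rw [Matrix.charpoly_reindex] at h
  refine h.trans_eq ?_
  rw [Fintype.sum_equiv e.symm _ (fun i => ∑ j, ‖A i j‖ ^ 2)]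
  intro x
  rw [Fintype.sum_equiv e.symm _ (fun j => ‖A (e.symm x) j‖ ^ 2)]
  intro y
  simp [Matrix.reindex_apply]

lemma key (d : ℕ) (U : Matrix (Fin d × Fin d) (Fin d × Fin d) ℂ)
    (hU : Uᴴ * U = 1) (σ : Matrix (Fin d) (Fin d) ℂ) (hσtr : σ.trace = 1)
    (a b : Fin d) :
    (∑ i, (realign U * ((1 : Matrix (Fin d) (Fin d) ℂ) ⊗ₖ σ) * (realign U)ᴴ) (i,a) (i,b))
      = if a = b then 1 else 0 := by
  have hU' : ∀ r s : Fin d × Fin d,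
      (∑ x : Fin d, ∑ e1 : Fin d, star (U (x, e1) r) * U (x, e1) s)
        = if r = s then 1 else 0 := by
    intro r s
    have := congrFun (congrFun hU r) s
    rw [Matrix.mul_apply, Fintype.sum_prod_type] at this
    simpa [Matrix.conjTranspose_apply, Matrix.one_apply] using this
  simp only [Matrix.mul_apply, Matrix.conjTranspose_apply, realign, Matrix.of_apply,
    Matrix.kroneckerMap_apply, Matrix.one_apply]
  have hc : ∀ (x : Fin d) (e : Fin d × Fin d),
      (∑ c : Fin d × Fin d, U (x, c.1) (a, c.2) * ((if c.1 = e.1 then 1 else 0) * σ c.2 e.2))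
        = ∑ c2, U (x, e.1) (a, c2) * σ c2 e.2 := by
    intro x e
    rw [Fintype.sum_prod_type, Finset.sum_comm]
    simp [mul_ite, ite_mul, Finset.sum_ite_eq']
  calc ∑ x : Fin d, ∑ e : Fin d × Fin d,
        (∑ c : Fin d × Fin d, U (x, c.1) (a, c.2) * ((if c.1 = e.1 then 1 else 0) * σ c.2 e.2)) *
          star (U (x, e.1) (b, e.2))
      = ∑ x : Fin d, ∑ e1 : Fin d, ∑ e2 : Fin d, ∑ c2 : Fin d,
          U (x, e1) (a, c2) * σ c2 e2 * star (U (x, e1) (b, e2)) := by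
        refine Finset.sum_congr rfl fun x _ => ?_
        rw [Fintype.sum_prod_type]
        refine Finset.sum_congr rfl fun e1 _ => Finset.sum_congr rfl fun e2 _ => ?_
        rw [hc x (e1, e2), Finset.sum_mul]
    _ = ∑ e2 : Fin d, ∑ c2 : Fin d, ∑ x : Fin d, ∑ e1 : Fin d,
          U (x, e1) (a, c2) * σ c2 e2 * star (U (x, e1) (b, e2)) := by
        calc ∑ x : Fin d, ∑ e1 : Fin d, ∑ e2 : Fin d, ∑ c2 : Fin d,
              U (x, e1) (a, c2) * σ c2 e2 * star (U (x, e1) (b, e2))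
            = ∑ x : Fin d, ∑ e2 : Fin d, ∑ e1 : Fin d, ∑ c2 : Fin d,
              U (x, e1) (a, c2) * σ c2 e2 * star (U (x, e1) (b, e2)) :=
              Finset.sum_congr rfl fun x _ => Finset.sum_comm
          _ = ∑ x : Fin d, ∑ e2 : Fin d, ∑ c2 : Fin d, ∑ e1 : Fin d,
              U (x, e1) (a, c2) * σ c2 e2 * star (U (x, e1) (b, e2)) :=
              Finset.sum_congr rfl fun x _ => Finset.sum_congr rfl fun e2 _ => Finset.sum_comm
          _ = ∑ e2 : Fin d, ∑ x : Fin d, ∑ c2 : Fin d, ∑ e1 : Fin d,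
              U (x, e1) (a, c2) * σ c2 e2 * star (U (x, e1) (b, e2)) := Finset.sum_comm
          _ = ∑ e2 : Fin d, ∑ c2 : Fin d, ∑ x : Fin d, ∑ e1 : Fin d,
              U (x, e1) (a, c2) * σ c2 e2 * star (U (x, e1) (b, e2)) :=
              Finset.sum_congr rfl fun e2 _ => Finset.sum_comm
    _ = ∑ e2 : Fin d, ∑ c2 : Fin d, σ c2 e2 *
          ∑ x : Fin d, ∑ e1 : Fin d, star (U (x, e1) (b, e2)) * U (x, e1) (a, c2) := by
        refine Finset.sum_congr rfl fun e2 _ => Finset.sum_congr rfl fun c2 _ => ?_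
        rw [Finset.mul_sum]
        refine Finset.sum_congr rfl fun x _ => ?_
        rw [Finset.mul_sum]
        refine Finset.sum_congr rfl fun e1 _ => ?_
        ring
    _ = ∑ e2 : Fin d, ∑ c2 : Fin d, σ c2 e2 * (if ((b,e2) : Fin d × Fin d) = (a,c2) then 1 else 0) := by
        refine Finset.sum_congr rfl fun e2 _ => Finset.sum_congr rfl fun c2 _ => ?_
        rw [hU' (b, e2) (a, c2)]
    _ = if a = b then 1 else 0 := by
        by_cases hab : a = b
        · subst hab
          have htr : ∑ e2 : Fin d, σ e2 e2 = 1 := by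
            simpa [Matrix.trace, Matrix.diag] using hσtr
          simp only [Prod.mk.injEq, true_and, eq_comm (a := a)]
          simp [mul_ite, Finset.sum_ite_eq, htr]
        · simp [Prod.ext_iff, Ne.symm hab, hab]

lemma realign_sum {d : ℕ} (X : Matrix (Fin d × Fin d) (Fin d × Fin d) ℂ) (g : ℂ → ℝ) :
    ∑ p, ∑ q, g (realign X p q) = ∑ x, ∑ y, g (X x y) := by
  let ι := Fin d × Fin d
  let e : (ι × ι) ≃ (ι × ι) :=
    ⟨fun z => ((z.1.1, z.2.1), (z.1.2, z.2.2)), fun w => ((w.1.1, w.2.1), (w.1.2, w.2.2)),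
      fun z => rfl, fun w => rfl⟩
  calc ∑ p, ∑ q, g (realign X p q)
      = ∑ z : ι × ι, g (realign X z.1 z.2) := by
        exact (Fintype.sum_prod_type (f := fun z : ι × ι => g (realign X z.1 z.2))).symm
    _ = ∑ z : ι × ι, g (X z.1 z.2) :=
        Fintype.sum_equiv e (fun z => g (realign X z.1 z.2)) (fun z => g (X z.1 z.2))
          (fun z => rfl)
    _ = ∑ x, ∑ y, g (X x y) := by
        exact Fintype.sum_prod_type (f := fun z : ι × ι => g (X z.1 z.2))

lemma kron_conjT {m n : Type*} [Fintype m] [Fintype n] (A : Matrix m m ℂ) (B : Matrix n n ℂ) :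
    (A ⊗ₖ B)ᴴ = Aᴴ ⊗ₖ Bᴴ := by
  ext p q
  simp [Matrix.conjTranspose_apply, Matrix.kroneckerMap_apply, star_mul']

lemma trace_M {d : ℕ} (V : Matrix (Fin d × Fin d) (Fin d × Fin d) ℂ)
    (hVV : Vᴴ * V = 1) (σ : Matrix (Fin d) (Fin d) ℂ) (hσ : σᴴ = σ) :
    Matrix.trace ((V * ((1 : Matrix (Fin d) (Fin d) ℂ) ⊗ₖ σ) * Vᴴ)ᴴ *
        (V * ((1 : Matrix (Fin d) (Fin d) ℂ) ⊗ₖ σ) * Vᴴ)) = (d : ℂ) * (σ * σ).trace := by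
  set N := (1 : Matrix (Fin d) (Fin d) ℂ) ⊗ₖ σ with hN
  have hNH : Nᴴ = N := by rw [hN, kron_conjT, Matrix.conjTranspose_one, hσ]
  have hMH : (V * N * Vᴴ)ᴴ = V * N * Vᴴ := by
    rw [Matrix.conjTranspose_mul, Matrix.conjTranspose_mul, Matrix.conjTranspose_conjTranspose,
      hNH, Matrix.mul_assoc]
  rw [hMH]
  have hVV' : ∀ M : Matrix (Fin d × Fin d) (Fin d × Fin d) ℂ, Vᴴ * (V * M) = M := fun M => by
    rw [← Matrix.mul_assoc, hVV, Matrix.one_mul]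
  have h1 : V * N * Vᴴ * (V * N * Vᴴ) = V * (N * N) * Vᴴ := by
    simp only [Matrix.mul_assoc, hVV']
  rw [h1, Matrix.trace_mul_comm, ← Matrix.mul_assoc, ← Matrix.mul_assoc, hVV,
    Matrix.one_mul]
  rw [hN, ← Matrix.mul_kronecker_mul, Matrix.one_mul, Matrix.trace_kronecker, Matrix.trace_one]
  simp

end aux

/-- For dual-unitary `U` (`U^{R₂}U^{R₂†} = 1`), the channel matrix
`L = [U^{R₂}(I⊗σ)U^{R₂†}]^{R₂}` of `E(ρ) = Tr₂[U(ρ⊗σ)U†]` has eigenvalue `1`,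
and the remaining eigenvalues satisfy `Σᵢ |λᵢ|² ≤ d·Tr(σ²) − 1`; in particular,
if `Tr(σ²) < 2/d` then all of them have modulus strictly less than `1`, so the
channel is mixing. -/
theorem dual_unitary_mixing (d : ℕ) (hd : 0 < d)
    (U : Matrix (Fin d × Fin d) (Fin d × Fin d) ℂ)
    (hU : Uᴴ * U = 1)
    (hdual : realign U * (realign U)ᴴ = 1)
    (σ : Matrix (Fin d) (Fin d) ℂ) (hσ : σ.PosSemidef) (hσtr : σ.trace = 1)
    (L : Matrix (Fin d × Fin d) (Fin d × Fin d) ℂ)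
    (hL : L = realign (realign U * ((1 : Matrix (Fin d) (Fin d) ℂ) ⊗ₖ σ) * (realign U)ᴴ)) :
    ∃ s : Multiset ℂ, L.charpoly.roots = 1 ::ₘ s ∧
      (s.map fun z => ‖z‖ ^ 2).sum ≤ (d : ℝ) * (σ * σ).trace.re - 1 ∧
      ((σ * σ).trace.re < 2 / (d : ℝ) → ∀ lam ∈ s, ‖lam‖ < 1) := by
  classical
  have hkey := key d U hU σ hσtr
  have hVV : (realign U)ᴴ * realign U = 1 := mul_eq_one_comm.mp hdual
  set M := realign U * ((1 : Matrix (Fin d) (Fin d) ℂ) ⊗ₖ σ) * (realign U)ᴴ with hMdef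
  -- the uniform state is a fixed left eigenvector: 1 is a root of the charpoly
  let w : Fin d × Fin d → ℂ := fun p => if p.1 = p.2 then 1 else 0
  have hw : w ≠ 0 := by
    intro h
    have := congrFun h (⟨0, hd⟩, ⟨0, hd⟩)
    simp [w] at this
  have hmv : ((1 : Matrix (Fin d × Fin d) (Fin d × Fin d) ℂ) - Lᵀ) *ᵥ w = 0 := by
    funext q
    have hq : ∑ p : Fin d × Fin d, Lᵀ q p * w p = w q := by
      calc ∑ p : Fin d × Fin d, Lᵀ q p * w p
          = ∑ p1, ∑ p2, L (p1, p2) q * (if p1 = p2 then 1 else 0) := by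
            simp only [Matrix.transpose_apply]
            exact Fintype.sum_prod_type (f := fun p : Fin d × Fin d => L p q * w p)
        _ = ∑ p1, M (p1, q.1) (p1, q.2) := by
            refine Finset.sum_congr rfl fun p1 _ => ?_
            simp only [mul_ite, mul_one, mul_zero, Finset.sum_ite_eq, Finset.mem_univ, if_true]
            rw [hL]
            rfl
        _ = if q.1 = q.2 then 1 else 0 := hkey q.1 q.2
        _ = w q := rfl
    have : ((1 : Matrix (Fin d × Fin d) (Fin d × Fin d) ℂ) - Lᵀ) *ᵥ w
        = (1 : Matrix (Fin d × Fin d) (Fin d × Fin d) ℂ) *ᵥ w - Lᵀ *ᵥ w := Matrix.sub_mulVec _ _ _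
    rw [this, Matrix.one_mulVec]
    have h2 : (Lᵀ *ᵥ w) q = w q := hq
    simp only [Pi.sub_apply, Pi.zero_apply, h2, Matrix.mulVec, dotProduct] at h2 ⊢
    rw [h2, sub_self]
  have hdet : ((1 : Matrix (Fin d × Fin d) (Fin d × Fin d) ℂ) - Lᵀ).det = 0 :=
    Matrix.exists_mulVec_eq_zero_iff.mp ⟨w, hw, hmv⟩
  have hroot : L.charpoly.IsRoot 1 := by
    rw [Polynomial.IsRoot, my_eval_charpoly]
    have he : Matrix.scalar (Fin d × Fin d) (1 : ℂ) - L
        = ((1 : Matrix (Fin d × Fin d) (Fin d × Fin d) ℂ) - Lᵀ)ᵀ := by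
      rw [Matrix.transpose_sub, Matrix.transpose_one, Matrix.transpose_transpose, _root_.map_one]
    rw [he, Matrix.det_transpose, hdet]
  have h1mem : (1 : ℂ) ∈ L.charpoly.roots :=
    Polynomial.mem_roots'.mpr ⟨(Matrix.charpoly_monic L).ne_zero, hroot⟩
  obtain ⟨s, hs⟩ := Multiset.exists_cons_of_mem h1mem
  refine ⟨s, hs, ?_⟩
  -- the Frobenius norm of L
  have hfrobL : ∑ p, ∑ q, ‖L p q‖ ^ 2 = (d : ℝ) * (σ * σ).trace.re := by
    have h1 : ∑ p, ∑ q, ‖L p q‖ ^ 2 = ∑ x, ∑ y, ‖M x y‖ ^ 2 := by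
      rw [hL]
      exact realign_sum M (fun z => ‖z‖ ^ 2)
    have h2 : Matrix.trace (Mᴴ * M) = (d : ℂ) * (σ * σ).trace :=
      trace_M (realign U) hVV σ hσ.1
    have h3 := my_frob M
    rw [h2] at h3
    have h4 := congrArg Complex.re h3
    rw [Complex.ofReal_re] at h4
    rw [h1, ← h4, Complex.mul_re]
    simp
  -- Schur's inequality
  have hschur := my_schur L
  rw [hs, Multiset.map_cons, Multiset.sum_cons, hfrobL] at hschur
  simp only [norm_one, one_pow] at hschur
  have hbound : (s.map fun z => ‖z‖ ^ 2).sum ≤ (d : ℝ) * (σ * σ).trace.re - 1 := by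
    linarith
  refine ⟨hbound, ?_⟩
  intro hlt lam hmem
  have hd' : (0 : ℝ) < d := by exact_mod_cast hd
  have h2d : (d : ℝ) * (2 / d) = 2 := by field_simp
  have hsum_lt : (s.map fun z => ‖z‖ ^ 2).sum < 1 := by
    have hm : (d : ℝ) * (σ * σ).trace.re < (d : ℝ) * (2 / d) :=
      mul_lt_mul_of_pos_left hlt hd'
    rw [h2d] at hm
    linarith
  have hmem' : ‖lam‖ ^ 2 ∈ s.map fun z => ‖z‖ ^ 2 :=
    Multiset.mem_map_of_mem _ hmem
  have hle : ‖lam‖ ^ 2 ≤ (s.map fun z => ‖z‖ ^ 2).sum :=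
    Multiset.single_le_sum
      (fun x hx => by
        obtain ⟨z, _, rfl⟩ := Multiset.mem_map.mp hx
        positivity) _ hmem'
  nlinarith [norm_nonneg lam]
end

section
/- Let U_D = ⊕_{i=1}^d uᵢ be a block-diagonal unitary on ℂ^d ⊗ ℂ^d with d×d unitary blocks uᵢ. Then the channel matrix L[U_D] = (1/d)[U_D^{R₂}U_D^{R₂†}]^{R₂} is diagonal in the product basis with entries λ_{ij} = (1/d)Tr(uᵢ uⱼ†). In particular, the d diagonal entries λ_{ii} equal 1, so the channel E(ρ) = Tr₂[U_D(ρ⊗I/d)U_D†] has eigenvalue 1 with multiplicity at least d and hence is not ergodic when d ≥ 2. -/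
open Matrix

/-- The block-diagonal unitary `U_D = ⊕ᵢ uᵢ`,
with `⟨iα|U_D|jβ⟩ = δᵢⱼ ⟨α|uᵢ|β⟩`. -/
def blockDiag {d : ℕ} (u : Fin d → Matrix (Fin d) (Fin d) ℂ) :
    Matrix (Fin d × Fin d) (Fin d × Fin d) ℂ :=
  Matrix.of fun p q => if p.1 = q.1 then u p.1 p.2 q.2 else 0

open Polynomial in
lemma charpoly_diagonal' {n : Type*} [Fintype n] [DecidableEq n] (f : n → ℂ) :
    (Matrix.diagonal f).charpoly = ∏ i, (X - C (f i)) := by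
  rw [Matrix.charpoly]
  have h : charmatrix (Matrix.diagonal f) = Matrix.diagonal fun i => X - C (f i) := by
    ext i j
    by_cases h : i = j
    · subst h; simp [charmatrix_apply_eq]
    · rw [charmatrix_apply_ne _ _ _ h, Matrix.diagonal_apply_ne _ h,
        Matrix.diagonal_apply_ne _ h]
      simp
  rw [h, Matrix.det_diagonal]

/-- For a block-diagonal unitary `U_D = ⊕ᵢ uᵢ`, the channel matrix
`L[U_D] = (1/d)[U_D^{R₂}U_D^{R₂†}]^{R₂}` is diagonal in the product basis with
entries `λᵢⱼ = (1/d)Tr(uᵢuⱼᴴ)`; in particular the `d` entries `λᵢᵢ` equal `1`,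
so `1` is an eigenvalue of algebraic multiplicity at least `d`, and the channel
is not ergodic when `d ≥ 2`. -/
theorem blockDiag_channel (d : ℕ) (hd : 0 < d)
    (u : Fin d → Matrix (Fin d) (Fin d) ℂ)
    (hu : ∀ i, (u i)ᴴ * u i = 1)
    (L : Matrix (Fin d × Fin d) (Fin d × Fin d) ℂ)
    (hL : L = ((1 : ℂ) / d) • realign (realign (blockDiag u) * (realign (blockDiag u))ᴴ)) :
    (∀ p q : Fin d × Fin d,
      L p q = if p = q then ((1 : ℂ) / d) * (u p.1 * (u p.2)ᴴ).trace else 0) ∧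
    (∀ i : Fin d, L (i, i) (i, i) = 1) ∧
    (2 ≤ d → d ≤ L.charpoly.roots.count 1) := by
  have hdC : (d : ℂ) ≠ 0 := by
    exact_mod_cast Nat.cast_ne_zero.mpr hd.ne'
  have key : ∀ p q : Fin d × Fin d,
      L p q = if p = q then ((1 : ℂ) / d) * (u p.1 * (u p.2)ᴴ).trace else 0 := by
    rintro ⟨p1, p2⟩ ⟨q1, q2⟩
    rw [hL]
    simp only [Matrix.smul_apply, realign, _root_.blockDiag, Matrix.of_apply, Matrix.mul_apply,
      Matrix.conjTranspose_apply, smul_eq_mul]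
    by_cases h1 : p1 = q1
    · by_cases h2 : p2 = q2
      · subst h1; subst h2
        simp only [if_pos rfl, Prod.mk.injEq, and_self]
        congr 1
        rw [Matrix.trace, Fintype.sum_prod_type]
        simp only [Matrix.diag_apply, Matrix.mul_apply, Matrix.conjTranspose_apply, if_true]
      · simp [h2, Prod.ext_iff]
    · simp [h1, Prod.ext_iff]
  have diag_one : ∀ i : Fin d, L (i, i) (i, i) = 1 := by
    intro i
    have huu : u i * (u i)ᴴ = 1 := mul_eq_one_comm.mpr (hu i)
    rw [key (i, i) (i, i), if_pos rfl, huu, Matrix.trace_one]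
    simp [Fintype.card_fin]
    field_simp
  refine ⟨key, diag_one, fun hd2 => ?_⟩
  set f : Fin d × Fin d → ℂ := fun p => ((1 : ℂ) / d) * (u p.1 * (u p.2)ᴴ).trace with hf
  have hLd : L = Matrix.diagonal f := by
    ext p q
    rw [key p q, Matrix.diagonal_apply]
  rw [hLd, charpoly_diagonal']
  have : (∏ p : Fin d × Fin d, (Polynomial.X - Polynomial.C (f p))) =
      ((Finset.univ.val.map fun p => Polynomial.X - Polynomial.C (f p)).prod) := rfl
  have hmm : (Multiset.map (fun p => Polynomial.X - Polynomial.C (f p)) Finset.univ.val) =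
      Multiset.map (fun a => Polynomial.X - Polynomial.C a) (Finset.univ.val.map f) :=
    by rw [Multiset.map_map]; rfl
  rw [this, hmm, Polynomial.roots_multiset_prod_X_sub_C]
  rw [Multiset.count_map]
  have hsub : ∀ i : Fin d, ((i, i) : Fin d × Fin d) ∈
      Finset.univ.filter (fun p => (1 : ℂ) = f p) := by
    intro i
    simp only [Finset.mem_filter, Finset.mem_univ, true_and]
    have := diag_one i
    rw [key (i, i) (i, i), if_pos rfl] at this
    exact this.symm
  calc d = (Finset.univ : Finset (Fin d)).card := (Finset.card_fin d).symm
    _ ≤ (Finset.univ.filter (fun p : Fin d × Fin d => (1 : ℂ) = f p)).card := by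
        apply Finset.card_le_card_of_injOn (fun i => (i, i))
        · intro i _; exact hsub i
        · intro a _ b _ h; exact (Prod.mk.injEq _ _ _ _ ▸ h).1
    _ = Multiset.card (Multiset.filter (fun p => (1 : ℂ) = f p) Finset.univ.val) := rfl
end
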